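/- Let r ≥ 1, parameters μ₁,…,μ_r and variables u₁,…,u_r. Define P_k = Σ_{|n|=k} Π_{i=1}^r (μ_i)_{n_i} u_i^{n_i}/n_i!, e_i = Σ_{S⊆{1,…,r}, |S|=i} Π_{j∈S} u_j (elementary symmetric polynomials), and f_i = Σ_{S⊆{1,…,r}, |S|=i} (Σ_{j∈S} μ_j) Π_{j∈S} u_j. Then for every k ≥ 1: k·P_k = Σ_{i=1}^{min(r,k)} (-1)^{i-1} ((k-i)·e_i + f_i)·P_{k-i}. -/

import Mathlib

/-!
`P_k` is the coefficient of `X^k` in `F = ∏ᵢ (1 - uᵢ X)^(-μᵢ)`, and `E = ∏ᵢ (1 - uᵢ X)` has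
coefficients `(-1)^i e_i`. Taking the logarithmic derivative of `F` factor by factor gives
`E F' = G F` with `G = ∑ᵢ μᵢ uᵢ ∏_{j ≠ i} (1 - u_j X)`, whose coefficients are `(-1)^i f_{i+1}`.
Comparing the coefficients of `X^k` in `X (E F' - G F) = 0` gives the recursion.
-/

open Finset

/-- Pochhammer symbol `(x)_n`. -/
noncomputable def poch (x : ℝ) (n : ℕ) : ℝ := (ascPochhammer ℝ n).eval x

theorem sum_powersetCard_succ_sum_erase {ι M : Type*} [DecidableEq ι] [AddCommMonoid M]
    (s : Finset ι) (m : ℕ) (g : ι → Finset ι → M) :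
    ∑ S ∈ s.powersetCard (m + 1), ∑ i ∈ S, g i (S.erase i) =
      ∑ i ∈ s, ∑ T ∈ (s.erase i).powersetCard m, g i T := by
  rw [sum_sigma', sum_sigma']
  refine sum_nbij' (fun p => ⟨p.2, p.1.erase p.2⟩) (fun q => ⟨insert q.1 q.2, q.1⟩)
    ?_ ?_ ?_ ?_ ?_ <;> rintro ⟨_, _⟩ <;>
    simp only [mem_sigma, mem_powersetCard, Sigma.mk.injEq] <;> grind

theorem sum_powersetCard_succ_sum_mul_prod {ι R : Type*} [DecidableEq ι] [CommSemiring R]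
    (s : Finset ι) (μ u : ι → R) (m : ℕ) :
    ∑ S ∈ s.powersetCard (m + 1), (∑ j ∈ S, μ j) * ∏ j ∈ S, u j =
      ∑ i ∈ s, μ i * u i * ∑ T ∈ (s.erase i).powersetCard m, ∏ j ∈ T, u j := by
  have split : ∀ S : Finset ι, (∑ j ∈ S, μ j) * ∏ j ∈ S, u j =
      ∑ i ∈ S, μ i * u i * ∏ j ∈ S.erase i, u j := fun S => by
    rw [sum_mul]
    refine sum_congr rfl fun i hi => ?_
    rw [← mul_prod_erase S u hi, mul_assoc]
  simp_rw [split, mul_sum]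
  exact sum_powersetCard_succ_sum_erase s m fun i T => μ i * u i * ∏ j ∈ T, u j

theorem Derivation.prod_mul_apply_prod {R A ι : Type*} [CommSemiring R] [CommRing A]
    [Algebra R A] [DecidableEq ι] (D : Derivation R A A) (s : Finset ι) {a b F : ι → A}
    (h : ∀ i ∈ s, a i * D (F i) = b i * F i) :
    (∏ i ∈ s, a i) * D (∏ i ∈ s, F i) =
      (∑ i ∈ s, b i * ∏ j ∈ s.erase i, a j) * ∏ i ∈ s, F i := by
  induction s using Finset.induction_on with
  | empty => simp
  | insert c s hc ih =>
    have hs : ∑ i ∈ s, b i * ∏ j ∈ (insert c s).erase i, a j =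
        a c * ∑ i ∈ s, b i * ∏ j ∈ s.erase i, a j := by
      rw [mul_sum]
      refine sum_congr rfl fun i hi => ?_
      rw [erase_insert_of_ne (ne_of_mem_of_not_mem hi hc).symm,
        prod_insert fun h => hc (mem_of_mem_erase h), mul_left_comm]
    rw [prod_insert hc, prod_insert hc, sum_insert hc, erase_insert hc, hs, D.leibniz,
      smul_eq_mul, smul_eq_mul]
    linear_combination (a c * F c) * ih (fun i hi => h i (mem_insert_of_mem hi))
      + (∏ i ∈ s, a i) * (∏ i ∈ s, F i) * h c (mem_insert_self c s)

theorem mul_eq_sum_Icc_of_sum_range_eq_zero {R : Type*} [CommRing R] (r k : ℕ)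
    {e f P : ℕ → R} (he0 : e 0 = 1) (hf0 : f 0 = 0) (hvanish : ∀ i, r < i → e i = 0 ∧ f i = 0)
    (h : ∑ i ∈ range (k + 1), (-1) ^ i * (((k - i : ℕ) : R) * e i + f i) * P (k - i) = 0) :
    (k : R) * P k =
      ∑ i ∈ Icc 1 (min r k), (-1) ^ (i - 1) * (((k - i : ℕ) : R) * e i + f i) * P (k - i) := by
  rw [range_eq_Ico, sum_eq_sum_Ico_succ_bot k.succ_pos, he0, hf0] at h
  calc (k : R) * P k
      = -∑ i ∈ Ico 1 (k + 1), (-1) ^ i * (((k - i : ℕ) : R) * e i + f i) * P (k - i) := by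
        linear_combination h
    _ = ∑ i ∈ Icc 1 k, (-1) ^ (i - 1) * (((k - i : ℕ) : R) * e i + f i) * P (k - i) := by
        rw [← Ico_add_one_right_eq_Icc, ← sum_neg_distrib]
        refine sum_congr rfl fun i hi => ?_
        obtain ⟨j, rfl⟩ : ∃ j, i = j + 1 := ⟨i - 1, by grind⟩
        simp [pow_succ]
    _ = _ := by
        refine (sum_subset (Icc_subset_Icc_right (min_le_right r k)) fun i hi hir => ?_).symm
        obtain ⟨he, hf⟩ := hvanish i (by grind)
        simp [he, hf]

open PowerSeries

theorem coeff_X_mul_derivative {R : Type*} [CommSemiring R] (f : R⟦X⟧) (n : ℕ) :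
    coeff n (X * d⁄dX R f) = n * coeff n f := by
  cases n with
  | zero => simp
  | succ n => rw [coeff_succ_X_mul, coeff_derivative, mul_comm, Nat.cast_succ]

theorem sum_range_coeff_mul_eq_zero_of_mul_derivative_eq {R : Type*} [CommRing R]
    {E F G : R⟦X⟧} (h : E * d⁄dX R F = G * F) (k : ℕ) :
    ∑ i ∈ range (k + 1), (coeff i E * ((k - i : ℕ) : R) - coeff i (X * G)) * coeff (k - i) F =
      0 := by
  have hX : E * (X * d⁄dX R F) - X * G * F = 0 := by linear_combination X * h
  rw [← map_zero (coeff k), ← hX, map_sub, coeff_mul, coeff_mul, ← sum_sub_distrib,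
    Nat.sum_antidiagonal_eq_sum_range_succ_mk]
  simp only [coeff_X_mul_derivative]
  exact sum_congr rfl fun _ _ => by ring

theorem coeff_prod_one_sub_C_mul_X {ι R : Type*} [CommRing R] (s : Finset ι) (u : ι → R)
    (m : ℕ) :
    coeff m (∏ j ∈ s, (1 - C (u j) * X)) = (-1) ^ m * ∑ T ∈ s.powersetCard m, ∏ j ∈ T, u j := by
  classical
  have expand : ∏ j ∈ s, (1 - C (u j) * X) =
      ∑ T ∈ s.powerset, C ((-1) ^ #T * ∏ j ∈ T, u j) * X ^ #T := by
    simp_rw [sub_eq_add_neg, prod_one_add, map_mul, map_pow, map_neg, map_one, map_prod,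
      ← prod_const, ← prod_mul_distrib]
    simp
  rw [expand, map_sum, powersetCard_eq_filter, sum_filter, mul_sum]
  refine sum_congr rfl fun T _ => ?_
  rw [coeff_C_mul_X_pow, mul_ite, mul_zero]
  grind

theorem coeff_sum_C_mul_prod_erase_one_sub_C_mul_X {ι R : Type*} [DecidableEq ι] [CommRing R]
    (s : Finset ι) (μ u : ι → R) (m : ℕ) :
    coeff m (∑ i ∈ s, C (μ i * u i) * ∏ j ∈ s.erase i, (1 - C (u j) * X)) =
      (-1) ^ m * ∑ S ∈ s.powersetCard (m + 1), (∑ j ∈ S, μ j) * ∏ j ∈ S, u j := by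
  simp_rw [sum_powersetCard_succ_sum_mul_prod, map_sum, coeff_C_mul,
    coeff_prod_one_sub_C_mul_X, mul_sum]
  exact sum_congr rfl fun _ _ => sum_congr rfl fun _ _ => by ring

/-- The binomial series of `(1 - y X)^(-x)`. -/
noncomputable def pochSeries (x y : ℝ) : ℝ⟦X⟧ := mk fun n => poch x n * y ^ n / n.factorial

theorem coeff_succ_pochSeries (x y : ℝ) (n : ℕ) :
    coeff (n + 1) (pochSeries x y) * (n + 1) = (x + n) * y * coeff n (pochSeries x y) := by
  simp only [pochSeries, coeff_mk, poch, ascPochhammer_succ_eval, pow_succ, Nat.factorial_succ]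
  push_cast
  field_simp

theorem one_sub_C_mul_X_mul_derivative_pochSeries (x y : ℝ) :
    (1 - C y * X) * d⁄dX ℝ (pochSeries x y) = C (x * y) * pochSeries x y := by
  ext n
  rw [sub_mul, one_mul, map_sub, mul_assoc, coeff_C_mul, coeff_C_mul, coeff_derivative]
  cases n with
  | zero => simpa using coeff_succ_pochSeries x y 0
  | succ n =>
    rw [coeff_succ_X_mul, coeff_derivative]
    have := coeff_succ_pochSeries x y (n + 1)
    push_cast at this ⊢
    linear_combination this

theorem coeff_prod_pochSeries {r : ℕ} (μ u : Fin r → ℝ) (k : ℕ) :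
    coeff k (∏ j, pochSeries (μ j) (u j)) = ∑ n ∈ Nat.antidiagonalTuple r k,
      ∏ i, poch (μ i) (n i) * u i ^ n i / (n i).factorial := by
  rw [coeff_prod]
  refine sum_equiv Finsupp.equivFunOnFinite (fun l => ?_) fun l _ => by simp [pochSeries]
  simp [Nat.mem_antidiagonalTuple]

theorem stmt1_general (r : ℕ) (μ u : Fin r → ℝ)
    (P : ℕ → ℝ)
    (hP : ∀ k, P k = ∑ n ∈ Finset.Nat.antidiagonalTuple r k,
        ∏ i, poch (μ i) (n i) * u i ^ n i / (Nat.factorial (n i)))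
    (e f : ℕ → ℝ)
    (he : ∀ i, e i = ∑ S ∈ Finset.powersetCard i (Finset.univ : Finset (Fin r)),
        ∏ j ∈ S, u j)
    (hf : ∀ i, f i = ∑ S ∈ Finset.powersetCard i (Finset.univ : Finset (Fin r)),
        (∑ j ∈ S, μ j) * ∏ j ∈ S, u j)
    (k : ℕ) :
    (k : ℝ) * P k =
      ∑ i ∈ Finset.Icc 1 (min r k),
        (-1 : ℝ) ^ (i - 1) * (((k - i : ℕ) : ℝ) * e i + f i) * P (k - i) := by
  have hvanish : ∀ i, r < i → e i = 0 ∧ f i = 0 := fun i hi => by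
    have hempty : (univ : Finset (Fin r)).powersetCard i = ∅ :=
      powersetCard_eq_empty.2 (by simpa using hi)
    simp [he, hf, hempty]
  set E := ∏ j, (1 - C (u j) * X)
  set F := ∏ j, pochSeries (μ j) (u j)
  set G := ∑ i, C (μ i * u i) * ∏ j ∈ univ.erase i, (1 - C (u j) * X)
  have hode : E * d⁄dX ℝ F = G * F :=
    Derivation.prod_mul_apply_prod _ _ fun i _ => one_sub_C_mul_X_mul_derivative_pochSeries _ _
  have hE : ∀ i, coeff i E = (-1) ^ i * e i := by simp [E, coeff_prod_one_sub_C_mul_X, he]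
  have hF : ∀ j, coeff j F = P j := by simp [F, coeff_prod_pochSeries, hP]
  have hXG : ∀ i, coeff i (X * G) = -((-1) ^ i * f i) := by
    rintro (_ | i)
    · simp [hf]
    · rw [coeff_succ_X_mul, coeff_sum_C_mul_prod_erase_one_sub_C_mul_X, hf, pow_succ]
      ring
  have key := sum_range_coeff_mul_eq_zero_of_mul_derivative_eq hode k
  simp only [hE, hF, hXG] at key
  refine mul_eq_sum_Icc_of_sum_range_eq_zero r k (by simp [he]) (by simp [hf]) hvanish ?_
  rw [← key]
  exact sum_congr rfl fun _ _ => by ring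

/-- recursion `k P_k = Σ_{i=1}^{min(r,k)} (-1)^{i-1}((k-i) e_i + f_i) P_{k-i}`
for `P_k = Σ_{|n|=k} Π (μᵢ)_{nᵢ} uᵢ^{nᵢ}/nᵢ!`, `e_i`, `f_i` the (weighted) elementary
symmetric polynomials. -/
theorem stmt1 (r : ℕ) (hr : 1 ≤ r) (μ u : Fin r → ℝ)
    (P : ℕ → ℝ)
    (hP : ∀ k, P k = ∑ n ∈ Finset.Nat.antidiagonalTuple r k,
        ∏ i, poch (μ i) (n i) * u i ^ n i / (Nat.factorial (n i)))
    (e f : ℕ → ℝ)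
    (he : ∀ i, e i = ∑ S ∈ Finset.powersetCard i (Finset.univ : Finset (Fin r)),
        ∏ j ∈ S, u j)
    (hf : ∀ i, f i = ∑ S ∈ Finset.powersetCard i (Finset.univ : Finset (Fin r)),
        (∑ j ∈ S, μ j) * ∏ j ∈ S, u j)
    (k : ℕ) (hk : 1 ≤ k) :
    (k : ℝ) * P k =
      ∑ i ∈ Finset.Icc 1 (min r k),
        (-1 : ℝ) ^ (i - 1) * (((k - i : ℕ) : ℝ) * e i + f i) * P (k - i) :=
  stmt1_general r μ u P hP e f he hf k
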